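/- Let G be a group and w a word such that w{G} is finite. For n ≥ 2, write W_i = [w(G), G, ⁽ⁱ⁾..., G]. If W_n is finite, then W_{n-1} is finite. -/

import Mathlib

/-!
Let `V = ⟨S⟩` with `S = w{G}`. As `S` is a finite normal subset, its centralizer `C` has finite
index, so the centre of `V` has finite index in `V` and `[V, V]` is finite by Schur's theorem.
Factoring out the finite normal subgroup `[V, V] W_n`, we may assume that `V` is abelian and
`W_n = 1`, i.e. `W_{n-1}` is central. For `x ∈ V` the commutator `[x, g]` depends only on `gC`
and is multiplicative in `x`, so every `W_i` is generated by finitely many elements. The generators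
`[x, g]` of `W_{n-1}` have `x ∈ W_{n-2}`, so `[x, -]` is a homomorphism into the centre and
`[x, g]^e = [x, g^e] = 1` for `e = |G : C|`. Thus `W_{n-1}` is a finitely generated abelian torsion
group, hence finite; back in `G`, `W_{n-1}` is finite because the kernel of the quotient map is.
-/

def wordValues {k : ℕ} (w : FreeGroup (Fin k)) (G : Type*) [Group G] : Set G :=
  Set.range fun g : Fin k → G => FreeGroup.lift g w

/-- Iterated commutator: `iterComm H 0 = H`, `iterComm H (n+1) = ⁅iterComm H n, G⁆`. -/
def iterComm {G : Type*} [Group G] (H : Subgroup G) : ℕ → Subgroup G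
  | 0 => H
  | n + 1 => ⁅iterComm H n, (⊤ : Subgroup G)⁆

open Subgroup
open scoped commutatorElement

section

variable {G : Type*} [Group G]

instance iterComm_normal (H : Subgroup G) [H.Normal] : ∀ i, (iterComm H i).Normal
  | 0 => ‹H.Normal›
  | i + 1 => by
    have := iterComm_normal H i
    exact commutator_normal _ _

theorem iterComm_le (H : Subgroup G) [H.Normal] : ∀ i, iterComm H i ≤ H
  | 0 => le_rfl
  | i + 1 => (commutator_le_left _ _).trans (iterComm_le H i)

theorem map_iterComm {G' : Type*} [Group G'] {f : G →* G'} (hf : Function.Surjective f)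
    (H : Subgroup G) : ∀ i, (iterComm H i).map f = iterComm (H.map f) i
  | 0 => rfl
  | i + 1 => by
    rw [iterComm, map_commutator, map_iterComm hf H i, map_top_of_surjective f hf]
    rfl

theorem commutatorElement_mul_mul_of_mem_center {a b z z' : G} (hz : z ∈ center G)
    (hz' : z' ∈ center G) : ⁅a * z, b * z'⁆ = ⁅a, b⁆ := by
  have hzc : ⁅z, b * z'⁆ = 1 := commutatorElement_eq_one_iff_mul_comm.mpr (hz.comm _)
  have hz'c : ⁅a, z'⁆ = 1 := commutatorElement_eq_one_iff_mul_comm.mpr (hz'.comm _).symm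
  rw [commutatorElement_mul_left_eq_conj_mul, hzc, commutatorElement_mul_right_eq_mul_conj, hz'c]
  group

instance finite_commutatorSet_of_finiteIndex_center [(center G).FiniteIndex] :
    Finite (commutatorSet G) := by
  refine Set.Finite.to_subtype <| (Set.finite_range
    fun p : (G ⧸ center G) × (G ⧸ center G) => ⁅p.1.out, p.2.out⁆).subset ?_
  rintro _ ⟨a, b, rfl⟩
  obtain ⟨z, hz⟩ := QuotientGroup.mk_out_eq_mul (center G) a
  obtain ⟨z', hz'⟩ := QuotientGroup.mk_out_eq_mul (center G) b
  exact ⟨(a, b), by simp only [hz, hz', commutatorElement_mul_mul_of_mem_center z.2 z'.2]⟩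

theorem finite_range_commutatorElement (x : G) [(centralizer {x}).FiniteIndex] :
    (Set.range fun g : G => ⁅x, g⁆).Finite := by
  refine (Set.finite_range fun q : G ⧸ centralizer {x} => ⁅x, q.out⁆).subset ?_
  rintro _ ⟨g, rfl⟩
  obtain ⟨c, hc⟩ := QuotientGroup.mk_out_eq_mul (centralizer {x}) g
  have hxc : ⁅x, (c : G)⁆ = 1 :=
    commutatorElement_eq_one_iff_mul_comm.mpr (mem_centralizer_singleton_iff.mp c.2).symm
  refine ⟨g, ?_⟩
  simp only [hc, commutatorElement_mul_right_eq_mul_conj, hxc, mul_one, mul_inv_cancel_right]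

theorem finite_of_finite_ker_of_finite_map {G' : Type*} [Group G'] (f : G →* G') [Finite f.ker]
    (A : Subgroup G) [Finite (A.map f)] : Finite A := by
  refine (f.comp A.subtype).finite_iff_finite_ker_range.mpr ⟨?_, ?_⟩
  · exact Finite.of_injective (fun x => (⟨x.1, x.2⟩ : f.ker)) fun _ _ h =>
      Subtype.val_injective (Subtype.val_injective (congrArg Subtype.val h :))
  · rwa [MonoidHom.range_comp, range_subtype]

def iterCommGenerators (S : Set G) : ℕ → Set G
  | 0 => S
  | i + 1 => ⋃ x ∈ iterCommGenerators S i, Set.range fun g : G => ⁅x, g⁆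

section ConjClosed

variable {S : Set G}

theorem closure_normal_of_conj_mem (hconj : ∀ g : G, ∀ s ∈ S, g * s * g⁻¹ ∈ S) :
    (closure S).Normal := by
  have hS : Group.conjugatesOfSet S ⊆ S := fun x hx => by
    obtain ⟨s, hs, hsx⟩ := Group.mem_conjugatesOfSet_iff.mp hx
    obtain ⟨g, rfl⟩ := isConj_iff.mp hsx
    exact hconj g s hs
  rw [le_antisymm closure_le_normalClosure (closure_mono hS)]
  exact normalClosure_normal

theorem finiteIndex_centralizer_of_conj_mem (hS : S.Finite)
    (hconj : ∀ g : G, ∀ s ∈ S, g * s * g⁻¹ ∈ S) : (centralizer S).FiniteIndex := by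
  have := hS.to_subtype
  rw [centralizer_eq_iInf, iInf_subtype']
  refine finiteIndex_iInf fun s => ⟨?_⟩
  -- the index of `centralizer {s}` is the size of the conjugacy class of `s`, which lies in `S`
  have horbit : MulAction.orbit (ConjAct G) (s : G) ⊆ S := by
    rintro _ ⟨g, rfl⟩
    exact hconj (ConjAct.ofConjAct g) s s.2
  have := MulAction.index_stabilizer (ConjAct G) (s : G)
  rw [ConjAct.stabilizer_eq_centralizer] at this
  change (centralizer {ConjAct.toConjAct (s : G)}).index ≠ 0
  rw [this]
  exact Set.ncard_ne_zero_of_mem (MulAction.mem_orbit_self _) (hS.subset horbit)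

theorem commute_of_mem_closure_of_mem_centralizer {x c : G} (hx : x ∈ closure S)
    (hc : c ∈ centralizer S) : Commute x c :=
  (closure_le_centralizer_centralizer S hx c hc).symm

theorem finite_commutator_closure (hS : S.Finite) (hconj : ∀ g : G, ∀ s ∈ S, g * s * g⁻¹ ∈ S) :
    Finite (⁅closure S, closure S⁆ : Subgroup G) := by
  have := finiteIndex_centralizer_of_conj_mem hS hconj
  have hcenter : (centralizer S).subgroupOf (closure S) ≤ center (closure S) := fun c hc =>
    mem_center_iff.mpr fun x => Subtype.ext
      (commute_of_mem_closure_of_mem_centralizer x.2 (mem_subgroupOf.mp hc)).eq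
  have := finiteIndex_of_le hcenter
  rw [← range_subtype (closure S), MonoidHom.range_eq_map, ← map_commutator, ← commutator_def]
  -- `Finite (commutator (closure S))` is Schur's theorem, found by instance search
  exact Finite.of_equiv _
    ((commutator (closure S)).equivMapOfInjective _ (closure S).subtype_injective).toEquiv

theorem iterCommGenerators_subset_iterComm :
    ∀ i, iterCommGenerators S i ⊆ iterComm (closure S) i
  | 0 => subset_closure
  | i + 1 => by
    simp only [iterCommGenerators, Set.iUnion_subset_iff]
    rintro x hx _ ⟨g, rfl⟩
    exact commutator_mem_commutator (iterCommGenerators_subset_iterComm i hx) (mem_top g)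

theorem finite_iterCommGenerators (hS : S.Finite) (hconj : ∀ g : G, ∀ s ∈ S, g * s * g⁻¹ ∈ S) :
    ∀ i, (iterCommGenerators S i).Finite
  | 0 => hS
  | i + 1 => by
    have := finiteIndex_centralizer_of_conj_mem hS hconj
    have := closure_normal_of_conj_mem hconj
    refine (finite_iterCommGenerators hS hconj i).biUnion fun x hx => ?_
    have hxS : x ∈ closure S := iterComm_le _ i (iterCommGenerators_subset_iterComm i hx)
    have : (centralizer {x}).FiniteIndex := finiteIndex_of_le fun c hc =>
      mem_centralizer_singleton_iff.mpr
        (commute_of_mem_closure_of_mem_centralizer hxS hc).eq.symm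
    exact finite_range_commutatorElement x

end ConjClosed

theorem commutator_closure_top_eq_closure {N : Subgroup G} [N.Normal] [IsMulCommutative N]
    {F : Set G} (hF : F ⊆ N) :
    ⁅closure F, ⊤⁆ = closure (⋃ x ∈ F, Set.range fun g : G => ⁅x, g⁆) := by
  have hFN : closure F ≤ N := (closure_le N).mpr hF
  have hmem : ∀ x ∈ N, ∀ g : G, ⁅x, g⁆ ∈ N := fun x hx g =>
    commutator_le_left N ⊤ (commutator_mem_commutator hx (mem_top g))
  refine le_antisymm (commutator_le.mpr fun x hx g _ => ?_) ((closure_le _).mpr ?_)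
  · induction hx using closure_induction with
    | mem x hx => exact subset_closure (Set.mem_biUnion hx ⟨g, rfl⟩)
    | one => simp
    | mul x y hx hy ihx ihy =>
      rw [commutatorElement_mul_left_eq_conj_mul,
        setLike_mul_comm (hFN hx) (hmem y (hFN hy) g), mul_inv_cancel_right]
      exact mul_mem ihy ihx
    | inv x hx ihx =>
      rw [commutatorElement_inv_left, ← commutatorElement_inv,
        setLike_mul_comm (inv_mem (hFN hx)) (inv_mem (hmem x (hFN hx) g)), inv_mul_cancel_right]
      exact inv_mem ihx
  · simp only [Set.iUnion_subset_iff]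
    rintro x hx _ ⟨g, rfl⟩
    exact commutator_mem_commutator (subset_closure hx) (mem_top g)

theorem iterComm_eq_closure_iterCommGenerators {S : Set G}
    (hconj : ∀ g : G, ∀ s ∈ S, g * s * g⁻¹ ∈ S) [IsMulCommutative (closure S)] :
    ∀ i, iterComm (closure S) i = closure (iterCommGenerators S i)
  | 0 => rfl
  | i + 1 => by
    have := closure_normal_of_conj_mem hconj
    rw [iterComm, iterComm_eq_closure_iterCommGenerators hconj i]
    exact commutator_closure_top_eq_closure fun x hx =>
      iterComm_le _ i (iterCommGenerators_subset_iterComm i hx)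

theorem commutatorElement_pow_right {x : G} (hx : ∀ g, ⁅x, g⁆ ∈ center G) (g : G) :
    ∀ k : ℕ, ⁅x, g ^ k⁆ = ⁅x, g⁆ ^ k
  | 0 => by simp
  | k + 1 => by
    rw [pow_succ, commutatorElement_mul_right_eq_mul_conj, mul_assoc _ (g ^ k),
      mem_center_iff.mp (hx g), mul_assoc, mul_inv_cancel_right,
      commutatorElement_pow_right hx g k, pow_succ]

theorem pow_eq_one_of_mem_closure {F : Set G} [IsMulCommutative (closure F)] {e : ℕ}
    (hF : ∀ y ∈ F, y ^ e = 1) {x : G} (hx : x ∈ closure F) : x ^ e = 1 := by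
  induction hx using closure_induction with
  | mem y hy => exact hF y hy
  | one => exact one_pow e
  | mul y z hy hz ihy ihz => rw [(Commute.mul_pow (setLike_mul_comm hy hz)), ihy, ihz, one_mul]
  | inv y _ ihy => rw [inv_pow, ihy, inv_one]

theorem finite_iterComm_of_isMulCommutative {S : Set G} (hS : S.Finite)
    (hconj : ∀ g : G, ∀ s ∈ S, g * s * g⁻¹ ∈ S) [IsMulCommutative (closure S)] (m : ℕ)
    (hbot : iterComm (closure S) (m + 2) = ⊥) : Finite (iterComm (closure S) (m + 1)) := by
  have hcenter : iterComm (closure S) (m + 1) ≤ center G := by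
    rw [← centralizer_univ, ← coe_top]
    exact commutator_eq_bot_iff_le_centralizer.mp hbot
  have := finiteIndex_centralizer_of_conj_mem hS hconj
  have := closure_normal_of_conj_mem hconj
  have : (centralizer S).Normal :=
    centralizer_closure S ▸ (inferInstance : (centralizer (closure S : Set G)).Normal)
  have hgen : ∀ y ∈ iterCommGenerators S (m + 1), y ^ (centralizer S).index = 1 := by
    simp only [iterCommGenerators, Set.mem_iUnion]
    rintro _ ⟨x, hx, g, rfl⟩
    have hxW := iterCommGenerators_subset_iterComm m hx
    rw [← commutatorElement_pow_right
      (fun h => hcenter (commutator_mem_commutator hxW (mem_top h)))]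
    exact commutatorElement_eq_one_iff_mul_comm.mpr
      (commute_of_mem_closure_of_mem_centralizer (iterComm_le _ m hxW) (pow_index_mem _ g)).eq
  rw [iterComm_eq_closure_iterCommGenerators hconj] at hcenter ⊢
  have : IsMulCommutative (closure (iterCommGenerators S (m + 1))) :=
    le_centralizer_iff_isMulCommutative.mp (hcenter.trans (center_le_centralizer _))
  have : Group.FG (closure (iterCommGenerators S (m + 1))) := (Group.fg_iff_subgroup_fg _).mpr
    ((fg_iff _).mpr ⟨_, rfl, finite_iterCommGenerators hS hconj (m + 1)⟩)
  open scoped IsMulCommutative in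
  exact CommGroup.finite_of_fg_isMulTorsion _ fun x => isOfFinOrder_iff_pow_eq_one.mpr
    ⟨_, Nat.pos_of_ne_zero FiniteIndex.index_ne_zero,
      Subtype.ext (pow_eq_one_of_mem_closure hgen x.2)⟩

theorem finite_iterComm_pred {S : Set G} (hS : S.Finite)
    (hconj : ∀ g : G, ∀ s ∈ S, g * s * g⁻¹ ∈ S) {n : ℕ} (hn : 2 ≤ n)
    (hfin : Finite (iterComm (closure S) n)) : Finite (iterComm (closure S) (n - 1)) := by
  obtain ⟨m, rfl⟩ : ∃ m, n = m + 2 := ⟨n - 2, by omega⟩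
  change Finite (iterComm (closure S) (m + 1))
  have := closure_normal_of_conj_mem hconj
  have := finite_commutator_closure hS hconj
  set V := closure S
  set K := ⁅V, V⁆ ⊔ iterComm V (m + 2)
  have : Finite K := by
    rw [← SetLike.coe_sort_coe, mul_normal]
    exact ((Set.toFinite _).mul (Set.toFinite _)).to_subtype
  set π := QuotientGroup.mk' K
  have hπ : Function.Surjective π := QuotientGroup.mk'_surjective K
  have hV : closure (π '' S) = V.map π := (MonoidHom.map_closure π S).symm
  have hconjπ : ∀ g, ∀ t ∈ π '' S, g * t * g⁻¹ ∈ π '' S := by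
    rintro g _ ⟨s, hs, rfl⟩
    obtain ⟨g, rfl⟩ := hπ g
    exact ⟨g * s * g⁻¹, hconj g s hs, by simp⟩
  have : IsMulCommutative (closure (π '' S)) := by
    rw [← le_centralizer_iff_isMulCommutative, ← commutator_eq_bot_iff_le_centralizer, hV,
      ← map_commutator, Subgroup.map_eq_bot_iff, QuotientGroup.ker_mk']
    exact le_sup_left
  have hbot : iterComm (closure (π '' S)) (m + 2) = ⊥ := by
    rw [hV, ← map_iterComm hπ, Subgroup.map_eq_bot_iff, QuotientGroup.ker_mk']
    exact le_sup_right
  have := finite_iterComm_of_isMulCommutative (hS.image π) hconjπ m hbot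
  rw [hV, ← map_iterComm hπ] at this
  have : Finite π.ker := by rwa [QuotientGroup.ker_mk']
  exact finite_of_finite_ker_of_finite_map π _

theorem conj_mem_wordValues {k : ℕ} (w : FreeGroup (Fin k)) (g : G) {s : G}
    (hs : s ∈ wordValues w G) : g * s * g⁻¹ ∈ wordValues w G := by
  obtain ⟨x, rfl⟩ := hs
  exact ⟨fun i => g * x i * g⁻¹,
    (FreeGroup.lift_unique ((MulAut.conj g).toMonoidHom.comp (FreeGroup.lift x)) (by simp)).symm⟩

end

theorem iterComm_finite_step {k : ℕ} {G : Type*} [Group G]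
    (w : FreeGroup (Fin k)) (hw : (wordValues w G).Finite) (n : ℕ) (hn : 2 ≤ n)
    (hfin : Finite (iterComm (Subgroup.closure (wordValues w G)) n)) :
    Finite (iterComm (Subgroup.closure (wordValues w G)) (n - 1)) :=
  finite_iterComm_pred hw (fun g _ hs => conj_mem_wordValues w g hs) hn hfin
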